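/- Let G be an amply regular graph with parameters (n, d, α, β) with girth 4 (so α = 0 and β ≥ 1). Then for every edge xy, the Lin-Lu-Yau curvature satisfies κ(x, y) = 2/d. -/

import Mathlib

open Finset SimpleGraph

variable {V : Type*} [Fintype V] [DecidableEq V]

/-- A graph is amply regular with parameters `(n, d, a, b)` if it is `d`-regular on `n`
vertices, adjacent vertices have exactly `a` common neighbors, and vertices at distance 2
have exactly `b` common neighbors. -/
def SimpleGraph.IsAmplyRegular (G : SimpleGraph V) [DecidableRel G.Adj]
    (n d a b : ℕ) : Prop :=
  Fintype.card V = n ∧ G.IsRegularOfDegree d ∧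
    (∀ x y, G.Adj x y → (G.neighborFinset x ∩ G.neighborFinset y).card = a) ∧
    (∀ x y, G.dist x y = 2 → (G.neighborFinset x ∩ G.neighborFinset y).card = b)

/-- The measure `μ_x^p` giving mass `p` to `x` and `(1-p)/deg x` to each neighbor of `x`. -/
noncomputable def muMeasure (G : SimpleGraph V) [DecidableRel G.Adj] (p : ℝ) (x : V) :
    V → ℝ :=
  fun v => if v = x then p else if G.Adj x v then (1 - p) / (G.degree x : ℝ) else 0

/-- `pi` is a transport plan between `mu1` and `mu2`. -/
def IsTransportPlan (mu1 mu2 : V → ℝ) (pi : V → V → ℝ) : Prop :=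
  (∀ u v, 0 ≤ pi u v) ∧ (∀ u, ∑ v, pi u v = mu1 u) ∧ (∀ v, ∑ u, pi u v = mu2 v)

/-- The 1-Wasserstein distance between two measures w.r.t. the graph distance. -/
noncomputable def W1 (G : SimpleGraph V) (mu1 mu2 : V → ℝ) : ℝ :=
  sInf {c : ℝ | ∃ pi, IsTransportPlan mu1 mu2 pi ∧
    c = ∑ u, ∑ v, (G.dist u v : ℝ) * pi u v}

/-- The Lin-Lu-Yau curvature of an edge of a `d`-regular graph, via the idleness
`p = 1/(d+1)` formula of Bourne et al. -/
noncomputable def kappaLLY (G : SimpleGraph V) [DecidableRel G.Adj] (d : ℕ) (x y : V) :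
    ℝ :=
  ((d + 1 : ℝ) / d) *
    (1 - W1 G (muMeasure G (1 / (d + 1 : ℝ)) x) (muMeasure G (1 / (d + 1 : ℝ)) y))

/-- `N_x = Γ(x) \ ({y} ∪ Γ(y))`. -/
def Nset (G : SimpleGraph V) [DecidableRel G.Adj] (x y : V) : Finset V :=
  G.neighborFinset x \ insert y (G.neighborFinset y)

/-- `Δ_{xy} = Γ(x) ∩ Γ(y)`. -/
def Dset (G : SimpleGraph V) [DecidableRel G.Adj] (x y : V) : Finset V :=
  G.neighborFinset x ∩ G.neighborFinset y

/-!
With `p = 1/(d+1)`, both `μ_x` and `μ_y` put mass `p` on every vertex of the closed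
neighbourhoods of `x` and `y`, and these meet only in `{x, y}` because a graph of girth 4 has no
triangles. A transport plan can leave at most `2p` in place and moves the rest at least
distance `1`, so `W₁ ≥ 1 - 2p = (d-1)/(d+1)`. Conversely, keep `p` at `x` and at `y` and move
`N_x = Γ(x) \ {y}` onto `N_y = Γ(y) \ {x}` along the edges between them: each `u ∈ N_x` has
exactly `β - 1` neighbours in `N_y` (its common neighbours with `y` other than `x`), and
symmetrically, so sending `p/(β-1)` along every such edge is a plan of cost `(d-1)p`. Here
`β ≥ 2` because opposite vertices of a 4-cycle are at distance 2 with two common neighbours.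
-/

namespace IsTransportPlan

variable {μ ν : V → ℝ} {π : V → V → ℝ}

omit [DecidableEq V] in
lemma le_left (hπ : IsTransportPlan μ ν π) (u v : V) : π u v ≤ μ u := by
  rw [← hπ.2.1 u]
  exact single_le_sum (fun w _ => hπ.1 u w) (mem_univ v)

omit [DecidableEq V] in
lemma le_right (hπ : IsTransportPlan μ ν π) (u v : V) : π u v ≤ ν v := by
  rw [← hπ.2.2 v]
  exact single_le_sum (fun w _ => hπ.1 w v) (mem_univ u)

lemma sum_sub_sum_min_le_cost (G : SimpleGraph V) (hπ : IsTransportPlan μ ν π)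
    (hreach : ∀ u v, μ u ≠ 0 → ν v ≠ 0 → G.Reachable u v) :
    ∑ u, μ u - ∑ u, min (μ u) (ν u) ≤ ∑ u, ∑ v, (G.dist u v : ℝ) * π u v := by
  have hterm : ∀ u v, π u v ≤ G.dist u v * π u v + if u = v then π u v else 0 := by
    intro u v
    by_cases huv : u = v
    · simp [huv]
    rcases (hπ.1 u v).eq_or_lt with h0 | h0
    · simp [← h0]
    have hr : G.Reachable u v :=
      hreach u v (h0.trans_le (hπ.le_left u v)).ne' (h0.trans_le (hπ.le_right u v)).ne'
    have hdist : (1 : ℝ) ≤ G.dist u v := by exact_mod_cast hr.pos_dist_of_ne huv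
    simpa [huv] using le_mul_of_one_le_left h0.le hdist
  have hdiag : ∑ u, π u u ≤ ∑ u, min (μ u) (ν u) :=
    sum_le_sum fun u _ => le_min (hπ.le_left u u) (hπ.le_right u u)
  calc ∑ u, μ u - ∑ u, min (μ u) (ν u)
      ≤ ∑ u, ∑ v, π u v - ∑ u, π u u := by
        rw [sum_congr rfl fun u _ => (hπ.2.1 u).symm]; linarith
    _ ≤ ∑ u, ∑ v, (G.dist u v : ℝ) * π u v := by
      have := sum_le_sum fun u (_ : u ∈ univ) => sum_le_sum fun v (_ : v ∈ univ) => hterm u v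
      simp only [sum_add_distrib, sum_ite_eq, mem_univ, if_true] at this
      linarith

end IsTransportPlan

namespace SimpleGraph

variable {G : SimpleGraph V} {x y z : V}

omit [Fintype V] [DecidableEq V] in
lemma girth_eq_three_of_adj (hxy : G.Adj x y) (hyz : G.Adj y z) (hxz : G.Adj x z) :
    G.girth = 3 := by
  have hc : (Walk.cons hxy (Walk.cons hyz (Walk.cons hxz.symm Walk.nil))).IsCycle := by
    simp [Walk.isCycle_def, Walk.isTrail_def, hxy.ne, hyz.ne, hxz.ne, hxy.ne', hxz.ne']
  exact le_antisymm (girth_le_length hc) (three_le_girth fun hA => hA _ hc)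

omit [Fintype V] [DecidableEq V] in
lemma dist_eq_two_of_adj_of_adj (hxy : G.Adj x y) (hyz : G.Adj y z) (hxz : ¬ G.Adj x z)
    (hne : x ≠ z) : G.dist x z = 2 := by
  rw [SimpleGraph.dist,
    edist_eq_two_iff.mpr ⟨hne, hxz, y, G.mem_commonNeighbors.mpr ⟨hxy, hyz.symm⟩⟩]
  rfl

omit [Fintype V] [DecidableEq V] in
lemma reachable_of_closedNbhd (hxy : G.Adj x y) {u v : V} (hu : u = x ∨ G.Adj x u)
    (hv : v = y ∨ G.Adj y v) : G.Reachable u v := by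
  have hux : G.Reachable u x := by rcases hu with rfl | hu; exacts [.refl u, hu.symm.reachable]
  have hyv : G.Reachable y v := by rcases hv with rfl | hv; exacts [.refl v, hv.reachable]
  exact hux.trans (hxy.reachable.trans hyv)

variable [DecidableRel G.Adj]

omit [DecidableEq V] in
lemma IsRegularOfDegree.pos_of_adj {d : ℕ} (hreg : G.IsRegularOfDegree d) (hxy : G.Adj x y) :
    0 < d :=
  hreg x ▸ (G.degree_pos_iff_exists_adj x).mpr ⟨y, hxy⟩

lemma exists_dist_eq_two_two_le_card_common (hg : G.girth = 4) :
    ∃ u v, G.dist u v = 2 ∧ 2 ≤ #(G.neighborFinset u ∩ G.neighborFinset v) := by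
  have hcyc : ¬ G.IsAcyclic := by rw [← girth_eq_zero]; omega
  obtain ⟨a, w, hw, hlen⟩ := exists_girth_eq_length.mpr hcyc
  rw [hg] at hlen
  have hadj : ∀ i < 4, G.Adj (w.getVert i) (w.getVert (i + 1)) :=
    fun i hi => w.adj_getVert_succ (by omega)
  have h01 : G.Adj a (w.getVert 1) := by simpa using hadj 0 (by omega)
  have h12 := hadj 1 (by omega)
  have h23 := hadj 2 (by omega)
  have h30 : G.Adj (w.getVert 3) a := by simpa [hlen] using hadj 3 (by omega)
  have h02 : a ≠ w.getVert 2 := by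
    simpa using hw.getVert_sub_one_ne_getVert_add_one (i := 1) (by omega)
  have h13 : w.getVert 1 ≠ w.getVert 3 :=
    hw.getVert_sub_one_ne_getVert_add_one (i := 2) (by omega)
  have hn02 : ¬ G.Adj a (w.getVert 2) := fun h => by
    simpa [hg] using girth_eq_three_of_adj h01 h12 h
  refine ⟨a, w.getVert 2, dist_eq_two_of_adj_of_adj h01 h12 hn02 h02, ?_⟩
  calc 2 = #{w.getVert 1, w.getVert 3} := (card_pair h13).symm
    _ ≤ _ := card_le_card fun v hv => by
      rcases mem_insert.mp hv with rfl | hv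
      · simp [mem_neighborFinset, h01, h12.symm]
      · simp [mem_singleton.mp hv, mem_neighborFinset, h30.symm, h23]

end SimpleGraph

section Neighbourhoods

variable {G : SimpleGraph V} [DecidableRel G.Adj] {x y : V} {p : ℝ}

lemma mem_Dset {u : V} : u ∈ Dset G x y ↔ G.Adj x u ∧ G.Adj y u := by
  simp only [Dset, mem_inter, mem_neighborFinset]

lemma Dset_comm : Dset G x y = Dset G y x := inter_comm _ _

lemma mem_Nset {u : V} : u ∈ Nset G x y ↔ G.Adj x u ∧ u ≠ y ∧ ¬ G.Adj y u := by
  simp only [Nset, mem_sdiff, mem_insert, mem_neighborFinset, not_or]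

lemma Dset_eq_empty_of_girth_ne_three (hg : G.girth ≠ 3) (hxy : G.Adj x y) :
    Dset G x y = ∅ :=
  eq_empty_of_forall_notMem fun _ hu =>
    hg (girth_eq_three_of_adj hxy (mem_Dset.mp hu).2 (mem_Dset.mp hu).1)

lemma mem_Nset_of_Dset_eq_empty (hD : Dset G x y = ∅) {u : V} (huy : u ≠ y) :
    u ∈ Nset G x y ↔ G.Adj x u := by
  rw [mem_Nset]
  refine ⟨fun h => h.1, fun hxu => ⟨hxu, huy, fun hyu => ?_⟩⟩
  simpa [hD] using mem_Dset.mpr ⟨hxu, hyu⟩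

lemma card_Nset_add_one_of_Dset_eq_empty (hxy : G.Adj x y) (hD : Dset G x y = ∅) :
    #(Nset G x y) + 1 = G.degree x := by
  have : Nset G x y = (G.neighborFinset x).erase y := by
    ext u
    by_cases huy : u = y
    · simp [huy, mem_Nset]
    · simp [mem_Nset_of_Dset_eq_empty hD huy, huy]
  rw [this, card_erase_add_one ((mem_neighborFinset _ _ _).mpr hxy),
    card_neighborFinset_eq_degree]

lemma dist_eq_two_of_mem_Nset (hxy : G.Adj x y) {u : V} (hu : u ∈ Nset G x y) :
    G.dist u y = 2 := by
  obtain ⟨hxu, huy, hyu⟩ := mem_Nset.mp hu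
  exact dist_eq_two_of_adj_of_adj hxu.symm hxy (fun h => hyu h.symm) huy

lemma card_Nset_inter_neighborFinset_add_one (hxy : G.Adj x y) (hD : Dset G x y = ∅)
    {u : V} (hu : u ∈ Nset G x y) :
    #(Nset G y x ∩ G.neighborFinset u) + 1 = #(G.neighborFinset u ∩ G.neighborFinset y) := by
  have : Nset G y x ∩ G.neighborFinset u =
      (G.neighborFinset u ∩ G.neighborFinset y).erase x := by
    ext v
    by_cases hvx : v = x
    · simp [hvx, mem_Nset]
    · simp [mem_Nset_of_Dset_eq_empty (Dset_comm.symm.trans hD) hvx, hvx, G.adj_comm u v,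
        and_comm]
  rw [this, card_erase_add_one]
  exact mem_inter.mpr ⟨(mem_neighborFinset _ _ _).mpr (mem_Nset.mp hu).1.symm,
    (mem_neighborFinset _ _ _).mpr hxy.symm⟩

lemma muMeasure_eq_of_isRegularOfDegree {d : ℕ} (hreg : G.IsRegularOfDegree d) (x : V) :
    muMeasure G (1 / (d + 1 : ℝ)) x =
      fun v => if v = x ∨ G.Adj x v then 1 / (d + 1 : ℝ) else 0 := by
  ext v
  by_cases hvx : v = x
  · simp [muMeasure, hvx]
  by_cases hxv : G.Adj x v
  · have hd : (d : ℝ) ≠ 0 := by exact_mod_cast (hreg.pos_of_adj hxv).ne'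
    simp only [muMeasure, hvx, hxv, if_false, if_true, or_true, hreg x]
    field_simp
    ring
  · simp [muMeasure, hvx, hxv]

lemma sum_ite_eq_or_adj (x : V) :
    ∑ u, (if u = x ∨ G.Adj x u then p else 0) = (G.degree x + 1) * p := by
  have : univ.filter (fun u => u = x ∨ G.Adj x u) = insert x (G.neighborFinset x) := by
    ext u; simp [mem_neighborFinset]
  rw [sum_ite, sum_const_zero, add_zero, sum_const, this, card_insert_of_notMem (by simp),
    card_neighborFinset_eq_degree, nsmul_eq_mul]
  push_cast
  ring

lemma sum_min_of_Dset_eq_empty (hp : 0 ≤ p) (hxy : G.Adj x y) (hD : Dset G x y = ∅) :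
    ∑ u, min (if u = x ∨ G.Adj x u then p else 0) (if u = y ∨ G.Adj y u then p else 0) =
      2 * p := by
  have hterm : ∀ u, min (if u = x ∨ G.Adj x u then p else 0)
      (if u = y ∨ G.Adj y u then p else 0) = if u ∈ ({x, y} : Finset V) then p else 0 := by
    intro u
    by_cases hux : u = x
    · subst hux; simp [hxy.symm]
    by_cases huy : u = y
    · subst huy; simp [hxy]
    have : ¬ (G.Adj x u ∧ G.Adj y u) := fun h => by simpa [hD] using mem_Dset.mpr h
    by_cases hxu : G.Adj x u <;> by_cases hyu : G.Adj y u <;> simp_all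
  rw [sum_congr rfl fun u _ => hterm u, sum_ite_mem, univ_inter, sum_const, card_pair hxy.ne,
    nsmul_eq_mul, Nat.cast_ofNat]

end Neighbourhoods

noncomputable def edgePlan (G : SimpleGraph V) [DecidableRel G.Adj] (x y : V) (p q : ℝ)
    (u v : V) : ℝ :=
  (if u = v ∧ (u = x ∨ u = y) then p else 0) +
    if u ∈ Nset G x y ∧ v ∈ Nset G y x ∧ G.Adj u v then q else 0

section EdgePlan

variable {G : SimpleGraph V} [DecidableRel G.Adj] {x y : V} {p q : ℝ}

lemma edgePlan_swap (u v : V) : edgePlan G y x p q v u = edgePlan G x y p q u v := by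
  unfold edgePlan
  simp only [G.adj_comm v u, and_left_comm (a := v ∈ Nset G y x)]
  by_cases huv : u = v
  · subst huv; simp only [true_and, or_comm]
  · simp only [huv, Ne.symm huv, false_and]

lemma sum_ite_mem_and_adj (s t : Finset V) (u : V) :
    ∑ v, (if u ∈ s ∧ v ∈ t ∧ G.Adj u v then q else 0) =
      if u ∈ s then #(t ∩ G.neighborFinset u) * q else 0 := by
  by_cases hu : u ∈ s
  · have : univ.filter (fun v => v ∈ t ∧ G.Adj u v) = t ∩ G.neighborFinset u := by
      ext v; simp [mem_neighborFinset]
    simp [hu, sum_ite, this]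
  · simp [hu]

lemma sum_edgePlan_left (u : V) :
    ∑ v, edgePlan G x y p q u v =
      (if u = x ∨ u = y then p else 0) +
        if u ∈ Nset G x y then #(Nset G y x ∩ G.neighborFinset u) * q else 0 := by
  rw [← sum_ite_mem_and_adj]
  simp only [edgePlan, sum_add_distrib, ite_and, sum_ite_eq, mem_univ, if_true]

lemma sum_edgePlan_left_of_Dset_eq_empty (hxy : G.Adj x y) (hD : Dset G x y = ∅)
    (hq : ∀ u ∈ Nset G x y, #(Nset G y x ∩ G.neighborFinset u) * q = p) (u : V) :
    ∑ v, edgePlan G x y p q u v = if u = x ∨ G.Adj x u then p else 0 := by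
  rw [sum_edgePlan_left]
  by_cases huy : u = y
  · subst huy
    simp [mem_Nset, hxy]
  have hmem := mem_Nset_of_Dset_eq_empty hD huy
  by_cases hxu : G.Adj x u
  · have hu := hmem.mpr hxu
    simp [hu, hq u hu, huy, hxu, hxu.ne']
  · simp [hmem, huy, hxu]

lemma sum_edgePlan_right_of_Dset_eq_empty (hxy : G.Adj x y) (hD : Dset G x y = ∅)
    (hq : ∀ v ∈ Nset G y x, #(Nset G x y ∩ G.neighborFinset v) * q = p) (v : V) :
    ∑ u, edgePlan G x y p q u v = if v = y ∨ G.Adj y v then p else 0 := by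
  simp only [← edgePlan_swap (x := x) (y := y) _ v]
  exact sum_edgePlan_left_of_Dset_eq_empty hxy.symm (Dset_comm.symm.trans hD) hq v

lemma isTransportPlan_edgePlan (hp : 0 ≤ p) (hq₀ : 0 ≤ q) (hxy : G.Adj x y)
    (hD : Dset G x y = ∅)
    (hqx : ∀ u ∈ Nset G x y, #(Nset G y x ∩ G.neighborFinset u) * q = p)
    (hqy : ∀ v ∈ Nset G y x, #(Nset G x y ∩ G.neighborFinset v) * q = p) :
    IsTransportPlan (fun u => if u = x ∨ G.Adj x u then p else 0)
      (fun v => if v = y ∨ G.Adj y v then p else 0) (edgePlan G x y p q) :=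
  ⟨fun u v => by unfold edgePlan; positivity,
    sum_edgePlan_left_of_Dset_eq_empty hxy hD hqx,
    sum_edgePlan_right_of_Dset_eq_empty hxy hD hqy⟩

lemma cost_edgePlan (hq : ∀ u ∈ Nset G x y, #(Nset G y x ∩ G.neighborFinset u) * q = p) :
    ∑ u, ∑ v, (G.dist u v : ℝ) * edgePlan G x y p q u v = #(Nset G x y) * p := by
  have hterm : ∀ u v, (G.dist u v : ℝ) * edgePlan G x y p q u v =
      if u ∈ Nset G x y ∧ v ∈ Nset G y x ∧ G.Adj u v then q else 0 := by
    intro u v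
    by_cases huv : u = v
    · subst huv; simp [edgePlan]
    by_cases hadj : G.Adj u v
    · simp [edgePlan, huv, hadj, dist_eq_one_iff_adj.mpr hadj]
    · simp [edgePlan, huv, hadj]
  simp only [hterm, sum_ite_mem_and_adj]
  rw [sum_ite_mem, univ_inter, sum_congr rfl hq, sum_const, nsmul_eq_mul]

theorem W1_muMeasure_eq_of_Dset_eq_empty {d m : ℕ} (hreg : G.IsRegularOfDegree d)
    (hxy : G.Adj x y) (hD : Dset G x y = ∅) (hm : m ≠ 0)
    (hx : ∀ u ∈ Nset G x y, #(Nset G y x ∩ G.neighborFinset u) = m)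
    (hy : ∀ v ∈ Nset G y x, #(Nset G x y ∩ G.neighborFinset v) = m) :
    W1 G (muMeasure G (1 / (d + 1 : ℝ)) x) (muMeasure G (1 / (d + 1 : ℝ)) y) =
      (d - 1) / (d + 1) := by
  set p : ℝ := 1 / (d + 1) with hp
  have hp₀ : 0 ≤ p := by positivity
  have hq : (m : ℝ) * (p / m) = p := by field_simp
  have hdeg : (#(Nset G x y) : ℝ) + 1 = d := by
    exact_mod_cast (card_Nset_add_one_of_Dset_eq_empty hxy hD).trans (hreg x)
  rw [W1, muMeasure_eq_of_isRegularOfDegree hreg x, muMeasure_eq_of_isRegularOfDegree hreg y]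
  refine IsLeast.csInf_eq ⟨⟨edgePlan G x y p (p / m), ?plan, ?cost⟩, ?lower⟩
  case plan =>
    exact isTransportPlan_edgePlan hp₀ (by positivity) hxy hD
      (fun u hu => by rw [hx u hu, hq]) (fun v hv => by rw [hy v hv, hq])
  case cost =>
    rw [cost_edgePlan fun u hu => by rw [hx u hu, hq], hp, ← hdeg]
    ring
  case lower =>
    rintro c ⟨π, hπ, rfl⟩
    have hreach : ∀ u v, (if u = x ∨ G.Adj x u then p else 0) ≠ 0 →
        (if v = y ∨ G.Adj y v then p else 0) ≠ 0 → G.Reachable u v := fun u v hu hv =>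
      reachable_of_closedNbhd hxy (ite_ne_right_iff.mp hu).1 (ite_ne_right_iff.mp hv).1
    have := hπ.sum_sub_sum_min_le_cost G hreach
    rw [sum_ite_eq_or_adj, sum_min_of_Dset_eq_empty hp₀ hxy hD, hreg x] at this
    calc ((d : ℝ) - 1) / (d + 1) = (d + 1) * p - 2 * p := by rw [hp]; field_simp; ring
      _ ≤ _ := this

end EdgePlan

/-- In an amply regular graph with girth `4`, every edge has Lin-Lu-Yau curvature
`2/d`. -/
theorem stmt6 (G : SimpleGraph V) [DecidableRel G.Adj] {n d a b : ℕ}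
    (h : G.IsAmplyRegular n d a b) (hg : G.girth = 4)
    (x y : V) (hxy : G.Adj x y) :
    kappaLLY G d x y = 2 / d := by
  obtain ⟨-, hreg, -, hβ⟩ := h
  have hD : ∀ {u v}, G.Adj u v → Dset G u v = ∅ :=
    Dset_eq_empty_of_girth_ne_three (by omega)
  have hb : 2 ≤ b := by
    obtain ⟨u, v, huv, hcard⟩ := exists_dist_eq_two_two_le_card_common hg
    rwa [hβ u v huv] at hcard
  have hcount : ∀ {u v}, G.Adj u v →
      ∀ w ∈ Nset G u v, #(Nset G v u ∩ G.neighborFinset w) = b - 1 := fun huv w hw => by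
    have := card_Nset_inter_neighborFinset_add_one huv (hD huv) hw
    rw [hβ w _ (dist_eq_two_of_mem_Nset huv hw)] at this
    omega
  have hd : (d : ℝ) ≠ 0 := by exact_mod_cast (hreg.pos_of_adj hxy).ne'
  rw [kappaLLY, W1_muMeasure_eq_of_Dset_eq_empty hreg hxy (hD hxy) (by omega) (hcount hxy)
    (hcount hxy.symm)]
  field_simp
  ring
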